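/- arXiv:2306.12828 — 3 statements merged into one kernel-verified Lean document; each statement's English description precedes it below -/
import Mathlib

section
/- Let T > 0, τ ∈ (0, T), a > 0, b > 0. Suppose y : [0,T) → [0,∞) is continuous on [0,T), differentiable on (0,T), and satisfies y'(t) + a·y(t) ≤ h(t) for all t ∈ (0,T), where h is a nonnegative locally integrable function with ∫_t^{t+τ} h(s) ds ≤ b for all t ∈ [0, T−τ). Then for all t ∈ [0,T), y(t) ≤ e^{−at} y(0) + b/(1 − e^{−aτ}). -/
open MeasureTheory Real Set

theorem gronwall_local_integral_bound
    (T τ a b : ℝ) (hT : 0 < T) (hτ : τ ∈ Set.Ioo 0 T) (ha : 0 < a) (hb : 0 < b)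
    (y h : ℝ → ℝ)
    (hy_cont : ContinuousOn y (Set.Ico 0 T))
    (hy_nonneg : ∀ t ∈ Set.Ico (0:ℝ) T, 0 ≤ y t)
    (hy_diff : ∀ t ∈ Set.Ioo (0:ℝ) T, DifferentiableAt ℝ y t)
    (hh_nonneg : ∀ t, 0 ≤ h t)
    (hh_loc : LocallyIntegrable h)
    (hh_bound : ∀ t ∈ Set.Ico (0:ℝ) (T - τ), ∫ s in t..(t + τ), h s ≤ b)
    (hineq : ∀ t ∈ Set.Ioo (0:ℝ) T, deriv y t + a * y t ≤ h t) :
    ∀ t ∈ Set.Ico (0:ℝ) T, y t ≤ Real.exp (-a * t) * y 0 + b / (1 - Real.exp (-a * τ)) := by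
  obtain ⟨hτ0, hτT⟩ := hτ
  have hint : ∀ s t : ℝ, IntegrableOn h (Icc s t) :=
    fun s t => hh_loc.integrableOn_isCompact isCompact_Icc
  -- key lemma
  have key : ∀ s t : ℝ, 0 ≤ s → s ≤ t → t < T →
      y t ≤ Real.exp (-a * (t - s)) * y s + ∫ u in s..t, h u := by
    intro s t hs hst htT
    set g : ℝ → ℝ := fun u => Real.exp (a * u) * y u with hg
    have hIcc : Icc s t ⊆ Ico 0 T := fun x hx => ⟨hs.trans hx.1, lt_of_le_of_lt hx.2 htT⟩
    have hgc : ContinuousOn g (Icc s t) := by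
      exact (Real.continuous_exp.comp (continuous_const.mul continuous_id)).continuousOn.mul
        (hy_cont.mono hIcc)
    have hφint : IntegrableOn (fun u => Real.exp (a * t) * h u) (Icc s t) :=
      (hint s t).const_mul _
    have hmain : g t - g s ≤ ∫ u in s..t, Real.exp (a * t) * h u := by
      apply intervalIntegral.sub_le_integral_of_hasDeriv_right_of_le hst hgc
        (g' := fun x => Real.exp (a * x) * (deriv y x) + a * Real.exp (a * x) * y x)
        (fun x hx => ?_) hφint (fun x hx => ?_)
      · have hx' : x ∈ Ioo (0:ℝ) T := ⟨lt_of_le_of_lt hs hx.1, hx.2.trans htT⟩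
        have hd : HasDerivAt y (deriv y x) x := (hy_diff x hx').hasDerivAt
        have he : HasDerivAt (fun u => Real.exp (a * u)) (a * Real.exp (a * x)) x := by
          have := (Real.hasDerivAt_exp (a * x)).comp x ((hasDerivAt_id x).const_mul a)
          exact this.congr_deriv (by ring)
        have := he.mul hd
        exact (this.congr_deriv (by ring) : HasDerivAt g
          (Real.exp (a * x) * deriv y x + a * Real.exp (a * x) * y x) x).hasDerivWithinAt
      · have hx' : x ∈ Ioo (0:ℝ) T := ⟨lt_of_le_of_lt hs hx.1, hx.2.trans htT⟩
        have h1 : Real.exp (a * x) * (deriv y x) + a * Real.exp (a * x) * y x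
            ≤ Real.exp (a * x) * h x := by
          have := hineq x hx'
          nlinarith [Real.exp_pos (a * x)]
        refine h1.trans ?_
        have : Real.exp (a * x) ≤ Real.exp (a * t) :=
          Real.exp_le_exp.2 (by nlinarith [hx.2.le])
        nlinarith [hh_nonneg x]
    rw [intervalIntegral.integral_const_mul] at hmain
    have hEt := Real.exp_pos (a * t)
    have hgt : g t ≤ g s + Real.exp (a * t) * ∫ u in s..t, h u := by linarith
    have : y t = Real.exp (-(a * t)) * g t := by
      simp [hg, ← mul_assoc, ← Real.exp_add]
    rw [this]
    have h2 : Real.exp (-(a*t)) * g t ≤ Real.exp (-(a*t)) * (g s + Real.exp (a*t) * ∫ u in s..t, h u) :=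
      mul_le_mul_of_nonneg_left hgt (Real.exp_pos _).le
    refine h2.trans (le_of_eq ?_)
    simp only [hg]
    rw [mul_add]
    rw [show Real.exp (-(a*t)) * (Real.exp (a*s) * y s) = Real.exp (-a*(t-s)) * y s by
      rw [← mul_assoc, ← Real.exp_add]; ring_nf]
    rw [show Real.exp (-(a*t)) * (Real.exp (a*t) * ∫ u in s..t, h u) = ∫ u in s..t, h u by
      rw [← mul_assoc, ← Real.exp_add]; simp]
  -- integral over interval of length τ starting at s ≥ 0, s ≤ T - τ gives ≤ b; also subintervals
  set q := Real.exp (-a * τ) with hqdef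
  have hq0 : 0 < q := Real.exp_pos _
  have hq1 : q < 1 := by
    rw [hqdef]
    have : -a * τ < 0 := by nlinarith
    exact Real.exp_lt_one_iff.2 this
  -- main claim by induction
  have claim : ∀ n : ℕ, ∀ t : ℝ, 0 ≤ t → t < T → t < (n + 1 : ℕ) * τ →
      y t ≤ Real.exp (-a * t) * y 0 + b * ∑ k ∈ Finset.range (n + 1), q ^ k := by
    intro n
    induction n with
    | zero =>
      intro t ht0 htT htτ
      have htτ' : t < τ := by push_cast at htτ; linarith
      have h1 := key 0 t le_rfl ht0 htT
      simp only [sub_zero] at h1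
      refine h1.trans ?_
      simp only [zero_add, Finset.sum_range_one, pow_zero, mul_one]
      gcongr
      -- ∫_0^t h ≤ ∫_0^τ h ≤ b
      have hb0 := hh_bound 0 ⟨le_rfl, by linarith⟩
      simp only [zero_add] at hb0
      refine le_trans ?_ hb0
      rw [← intervalIntegral.integral_add_adjacent_intervals (a := 0) (b := t) (c := τ)]
      · have : 0 ≤ ∫ u in t..τ, h u :=
          intervalIntegral.integral_nonneg htτ'.le (fun u _ => hh_nonneg u)
        linarith
      · exact (intervalIntegrable_iff_integrableOn_Icc_of_le ht0).2 (hint 0 t)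
      · exact (intervalIntegrable_iff_integrableOn_Icc_of_le htτ'.le).2 (hint t τ)
    | succ n ih =>
      intro t ht0 htT htτ
      by_cases hcase : t < (n + 1 : ℕ) * τ
      · refine (ih t ht0 htT hcase).trans ?_
        have hmono : ∑ k ∈ Finset.range (n + 1), q ^ k ≤ ∑ k ∈ Finset.range (n + 2), q ^ k :=
          Finset.sum_le_sum_of_subset_of_nonneg
            (Finset.range_subset_range.2 (Nat.le_succ _)) (fun i _ _ => pow_nonneg hq0.le i)
        nlinarith [mul_le_mul_of_nonneg_left hmono hb.le]
      · push_neg at hcase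
        have hτt : τ ≤ t := by
          have : (1:ℝ) ≤ (n+1:ℕ) := by exact_mod_cast Nat.one_le_iff_ne_zero.2 (by omega)
          nlinarith
        have hs0 : (0:ℝ) ≤ t - τ := by linarith
        have h1 := key (t - τ) t hs0 (by linarith) htT
        have hEq : Real.exp (-a * (t - (t - τ))) = q := by rw [hqdef]; ring_nf
        rw [show t - (t - τ) = τ by ring] at h1
        have hb1 : ∫ u in (t - τ)..t, h u ≤ b := by
          have := hh_bound (t - τ) ⟨hs0, by linarith⟩
          rwa [show t - τ + τ = t by ring] at this
        have hprev : y (t - τ) ≤ Real.exp (-a * (t - τ)) * y 0 +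
            b * ∑ k ∈ Finset.range (n + 1), q ^ k := by
          apply ih (t - τ) hs0 (by linarith)
          push_cast at htτ ⊢
          linarith
        have h2 : y t ≤ q * y (t - τ) + b := by
          calc y t ≤ Real.exp (-a * τ) * y (t - τ) + ∫ u in (t - τ)..t, h u := h1
            _ ≤ q * y (t - τ) + b := by rw [← hqdef]; linarith
        have h3 : q * y (t - τ) ≤ q * (Real.exp (-a * (t - τ)) * y 0 +
            b * ∑ k ∈ Finset.range (n + 1), q ^ k) :=
          mul_le_mul_of_nonneg_left hprev hq0.le
        have hqe : q * Real.exp (-a * (t - τ)) = Real.exp (-a * t) := by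
          rw [hqdef, ← Real.exp_add]; ring_nf
        have hsum : b * ∑ k ∈ Finset.range (n + 2), q ^ k =
            q * (b * ∑ k ∈ Finset.range (n + 1), q ^ k) + b := by
          rw [geom_sum_succ]
          ring
        calc y t ≤ q * y (t - τ) + b := h2
          _ ≤ q * (Real.exp (-a * (t - τ)) * y 0 + b * ∑ k ∈ Finset.range (n + 1), q ^ k) + b := by
              linarith
          _ = Real.exp (-a * t) * y 0 + b * ∑ k ∈ Finset.range (n + 2), q ^ k := by
              rw [hsum, mul_add, ← mul_assoc, hqe]; ring
  -- conclude
  intro t ht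
  obtain ⟨ht0, htT⟩ := ht
  obtain ⟨n, hn⟩ := exists_nat_gt (t / τ)
  have htn : t < (n + 1 : ℕ) * τ := by
    have h1 : t < n * τ := by
      rw [div_lt_iff₀ hτ0] at hn; linarith
    have : (n:ℝ) * τ ≤ (n + 1 : ℕ) * τ := by
      push_cast; nlinarith
    linarith
  refine (claim n t ht0 htT htn).trans ?_
  gcongr
  have hsum : ∑ k ∈ Finset.range (n + 1), q ^ k ≤ (1 - q)⁻¹ := by
    have := Summable.sum_le_tsum (Finset.range (n + 1)) (fun i _ => pow_nonneg hq0.le i)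
      (summable_geometric_of_lt_one hq0.le hq1)
    rwa [tsum_geometric_of_lt_one hq0.le hq1] at this
  calc b * ∑ k ∈ Finset.range (n + 1), q ^ k ≤ b * (1 - q)⁻¹ :=
        mul_le_mul_of_nonneg_left hsum hb.le
    _ = b / (1 - q) := by rw [div_eq_mul_inv]
end

section
/- Let a > 0, τ > 0, b ≥ 0, T > 0 with τ < T, and let h : ℝ → [0,∞) be locally integrable with ∫_t^{t+τ} h(s) ds ≤ b for all t ∈ [0, T−τ). Then for all t ∈ [0,T), ∫_0^t e^{−a(t−s)} h(s) ds ≤ b/(1 − e^{−aτ}). -/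
open MeasureTheory Real Set

theorem exp_weighted_integral_bound
    (a τ b T : ℝ) (ha : 0 < a) (hτ : 0 < τ) (hb : 0 ≤ b) (hT : 0 < T) (hτT : τ < T)
    (h : ℝ → ℝ)
    (hh_nonneg : ∀ t, 0 ≤ h t)
    (hh_loc : LocallyIntegrable h)
    (hh_bound : ∀ t ∈ Set.Ico (0:ℝ) (T - τ), ∫ s in t..(t + τ), h s ≤ b) :
    ∀ t ∈ Set.Ico (0:ℝ) T,
      ∫ s in (0:ℝ)..t, Real.exp (-a * (t - s)) * h s ≤ b / (1 - Real.exp (-a * τ)) := by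
  intro t ht
  set E := Real.exp (-a * τ) with hE
  have hE0 : 0 < E := Real.exp_pos _
  have hE1 : E < 1 := by
    rw [hE]
    apply Real.exp_lt_one_iff.mpr
    nlinarith
  have h1E : 0 < 1 - E := by linarith
  have hbB : b ≤ b / (1 - E) := by
    rw [le_div_iff₀ h1E]; nlinarith
  have hB0 : 0 ≤ b / (1 - E) := le_trans hb hbB
  have hinth : ∀ c d : ℝ, IntervalIntegrable h volume c d := by
    intro c d
    rw [intervalIntegrable_iff]
    exact (hh_loc.integrableOn_isCompact isCompact_uIcc).mono_set
      Set.Ioc_subset_Icc_self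
  have hint : ∀ u c d : ℝ,
      IntervalIntegrable (fun s => Real.exp (-a * (u - s)) * h s) volume c d := by
    intro u c d
    rw [intervalIntegrable_iff]
    refine ((hh_loc.integrableOn_isCompact isCompact_uIcc).continuousOn_mul
      ?_ isCompact_uIcc).mono_set Set.Ioc_subset_Icc_self
    fun_prop
  obtain ⟨n, hn⟩ : ∃ n : ℕ, t < n * τ := by
    obtain ⟨n, hn⟩ := exists_nat_gt (t / τ)
    exact ⟨n, by rwa [div_lt_iff₀ hτ] at hn⟩
  induction n generalizing t with
  | zero => simp at hn; linarith [ht.1]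
  | succ n ih =>
    by_cases hcase : t < τ
    · -- base case: t < τ
      calc ∫ s in (0:ℝ)..t, Real.exp (-a * (t - s)) * h s
          ≤ ∫ s in (0:ℝ)..t, h s := by
            apply intervalIntegral.integral_mono_on ht.1 (hint t 0 t) (hinth 0 t)
            intro x hx
            have h1 : Real.exp (-a * (t - x)) ≤ 1 :=
              Real.exp_le_one_iff.mpr (by nlinarith [hx.2])
            nlinarith [hh_nonneg x, Real.exp_pos (-a * (t - x))]
        _ ≤ ∫ s in (0:ℝ)..τ, h s := by
            have hsplit := intervalIntegral.integral_add_adjacent_intervals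
              (hinth 0 t) (hinth t τ)
            have hpos : 0 ≤ ∫ s in t..τ, h s :=
              intervalIntegral.integral_nonneg hcase.le (fun x _ => hh_nonneg x)
            linarith
        _ ≤ b := by
            have := hh_bound 0 ⟨le_refl 0, by linarith⟩
            simpa using this
        _ ≤ b / (1 - E) := hbB
    · -- step: τ ≤ t
      push_neg at hcase
      have hsplit := intervalIntegral.integral_add_adjacent_intervals
        (hint t 0 (t - τ)) (hint t (t - τ) t)
      have h2 : ∫ s in (t - τ)..t, Real.exp (-a * (t - s)) * h s ≤ b := by
        have hmono : ∫ s in (t - τ)..t, Real.exp (-a * (t - s)) * h s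
            ≤ ∫ s in (t - τ)..t, h s := by
          apply intervalIntegral.integral_mono_on (by linarith)
            (hint t (t - τ) t) (hinth (t - τ) t)
          intro x hx
          have h1 : Real.exp (-a * (t - x)) ≤ 1 :=
            Real.exp_le_one_iff.mpr (by nlinarith [hx.2])
          nlinarith [hh_nonneg x, Real.exp_pos (-a * (t - x))]
        have hbd := hh_bound (t - τ) ⟨by linarith, by linarith [ht.2]⟩
        have heq : t - τ + τ = t := by ring
        rw [heq] at hbd
        linarith
      have h1 : ∫ s in (0:ℝ)..(t - τ), Real.exp (-a * (t - s)) * h s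
          = E * ∫ s in (0:ℝ)..(t - τ), Real.exp (-a * ((t - τ) - s)) * h s := by
        rw [← intervalIntegral.integral_const_mul]
        apply intervalIntegral.integral_congr
        intro x _
        show Real.exp (-a * (t - x)) * h x
            = E * (Real.exp (-a * ((t - τ) - x)) * h x)
        rw [← mul_assoc, hE, ← Real.exp_add]
        congr 2
        ring
      have hF : ∫ s in (0:ℝ)..(t - τ), Real.exp (-a * ((t - τ) - s)) * h s
          ≤ b / (1 - E) := by
        apply ih (t - τ) ⟨by linarith, by linarith [ht.2]⟩
        push_cast at hn
        linarith
      have hEB : E * (∫ s in (0:ℝ)..(t - τ), Real.exp (-a * ((t - τ) - s)) * h s)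
          ≤ E * (b / (1 - E)) := by
        exact mul_le_mul_of_nonneg_left hF hE0.le
      have hkey : (b / (1 - E)) * (1 - E) = b := div_mul_cancel₀ b h1E.ne'
      nlinarith [hsplit, h1, h2, hEB]
end

section
/- Let σ > 1 and suppose b₁, b₂, b₃ > 0 satisfy b₁ ≤ 1, b₃ < b₁b₂, and b₂ + b₃ ≤ 1/2. Then there exists a triple (u_*, v_*, w_*) of positive reals satisfying: u_* + b₁ v_* + b₃ w_* = 1, −u_* + v_* + b₂ w_* = 1, and w_*^σ − u_* − v_* = 1. -/
theorem coexistence_steady_state_exists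
    (σ b₁ b₂ b₃ : ℝ) (hσ : 1 < σ) (hb₁ : 0 < b₁) (hb₂ : 0 < b₂) (hb₃ : 0 < b₃)
    (hH1 : b₁ ≤ 1) (hH2 : b₃ < b₁ * b₂) (hH3 : b₂ + b₃ ≤ 1 / 2) :
    ∃ u v w : ℝ, 0 < u ∧ 0 < v ∧ 0 < w ∧
      u + b₁ * v + b₃ * w = 1 ∧
      -u + v + b₂ * w = 1 ∧
      w ^ σ - u - v = 1 := by
  set f : ℝ → ℝ := fun w => (b₁ + 1) * w ^ σ + (b₂ + 2 * b₃ - b₁ * b₂) * w - 4 with hf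
  have hcont : ContinuousOn f (Set.Icc (0:ℝ) 4) := by
    apply Continuous.continuousOn
    exact ((continuous_const.mul (Real.continuous_rpow_const (by linarith))).add
      (continuous_const.mul continuous_id)).sub continuous_const
  have hf0 : f 0 = -4 := by
    simp [hf, Real.zero_rpow (by linarith : σ ≠ 0)]
  have h4 : (4:ℝ) < 4 ^ σ := by
    calc (4:ℝ) = 4 ^ (1:ℝ) := by rw [Real.rpow_one]
    _ < 4 ^ σ := (Real.rpow_lt_rpow_left_iff (by norm_num)).mpr hσ
  have hf4 : 0 < f 4 := by
    have hc : 0 < b₂ + 2 * b₃ - b₁ * b₂ := by nlinarith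
    simp only [hf]
    nlinarith
  have hsub := intermediate_value_Ioo (by norm_num : (0:ℝ) ≤ 4) hcont
  obtain ⟨w, hw, hfw⟩ := hsub (by rw [hf0]; exact ⟨by linarith, hf4⟩ : (0:ℝ) ∈ Set.Ioo (f 0) (f 4))
  obtain ⟨hw0, hw4⟩ := hw
  have hb1 : b₁ + 1 ≠ 0 := by positivity
  refine ⟨((1 - b₁) + (b₁ * b₂ - b₃) * w) / (b₁ + 1),
    (2 - (b₂ + b₃) * w) / (b₁ + 1), w, ?_, ?_, hw0, ?_, ?_, ?_⟩
  · apply div_pos _ (by linarith)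
    nlinarith
  · apply div_pos _ (by linarith)
    nlinarith
  · field_simp
    ring
  · field_simp
    ring
  · have : (b₁ + 1) * w ^ σ = 4 - (b₂ + 2 * b₃ - b₁ * b₂) * w := by
      simp only [hf] at hfw; linarith
    have hws : w ^ σ = (4 - (b₂ + 2 * b₃ - b₁ * b₂) * w) / (b₁ + 1) := by
      field_simp; linarith
    rw [hws]
    field_simp
    ring
end
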